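/- Let G be a finite connected simple graph with vertex set V and edge set E, where each edge e ∈ E is given an orientation with tail t(e) and head h(e). Let d : ℝ^V → ℝ^E be the discrete gradient map defined by (dφ)_e = φ(h(e)) − φ(t(e)). Let K be a real symmetric positive semidefinite matrix indexed by E × E whose kernel (as a linear map x ↦ Kx) equals the range of d. If E_e ⊆ E is a set of edges such that the spanning subgraph (V, E_e) is connected, then the principal submatrix of K obtained by keeping only the rows and columns indexed by E \ E_e is positive definite; in particular it is invertible. -/

import Mathlib

/-! A vector `x` supported off `Ee` has the same value under the quadratic form of the principal
submatrix as its extension by zero under that of `K`. A positive semidefinite `K` is isotropic only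
on its kernel, so an isotropic `x` extends to a gradient `dφ` vanishing on `Ee`. Then `φ` is
constant along the edges of `Ee`, hence on all of `V` since `(V, Ee)` is connected, and
`x = dφ = 0`. -/

open Matrix Function
open scoped ComplexOrder

namespace Matrix

section Extend

variable {m n α : Type*} [Fintype m] [Fintype n] [NonUnitalNonAssocSemiring α]

theorem dotProduct_extend_zero {e : m → n} (he : Injective e) (u : n → α) (x : m → α) :
    u ⬝ᵥ extend e x 0 = (u ∘ e) ⬝ᵥ x :=
  (Fintype.sum_of_injective e he _ _ (fun i hi => by simp [extend_apply' _ _ _ hi])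
    fun j => by simp [he.extend_apply]).symm

theorem submatrix_mulVec_eq_comp_extend {e : m → n} (he : Injective e) (M : Matrix n n α)
    (x : m → α) : M.submatrix e e *ᵥ x = (M *ᵥ extend e x 0) ∘ e :=
  funext fun j => (dotProduct_extend_zero he (M (e j)) x).symm

theorem star_dotProduct_submatrix_mulVec_eq_extend [StarAddMonoid α] {e : m → n}
    (he : Injective e) (M : Matrix n n α) (x : m → α) :
    star x ⬝ᵥ M.submatrix e e *ᵥ x = star (extend e x 0) ⬝ᵥ M *ᵥ extend e x 0 :=
  Fintype.sum_of_injective e he _ _ (fun i hi => by simp [extend_apply' _ _ _ hi])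
    fun j => by simp [he.extend_apply, submatrix_mulVec_eq_comp_extend he]

end Extend

theorem PosSemidef.posDef_submatrix_of_ker {m n 𝕜 : Type*} [Fintype m] [Fintype n] [RCLike 𝕜]
    {M : Matrix n n 𝕜} (hM : M.PosSemidef) {e : m → n} (he : Injective e)
    (hker : ∀ y, M *ᵥ y = 0 → (∀ i ∉ Set.range e, y i = 0) → y = 0) :
    (M.submatrix e e).PosDef := by
  refine .of_dotProduct_mulVec_pos (hM.submatrix e).isHermitian fun x hx => ?_
  refine ((hM.submatrix e).dotProduct_mulVec_nonneg x).lt_of_ne' fun hzero => hx ?_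
  rw [star_dotProduct_submatrix_mulVec_eq_extend he, hM.dotProduct_mulVec_zero_iff] at hzero
  have hext := hker _ hzero fun i hi => extend_apply' _ _ _ hi
  funext j
  simpa [he.extend_apply] using congrFun hext (e j)

end Matrix

theorem SimpleGraph.Reachable.apply_eq_of_forall_adj {V α : Type*} {G : SimpleGraph V}
    {f : V → α} (hf : ∀ u v, G.Adj u v → f u = f v) {u v : V} (huv : G.Reachable u v) :
    f u = f v := by
  obtain ⟨w⟩ := huv
  induction w with
  | nil => rfl
  | cons hadj _ ih => exact (hf _ _ hadj).trans ih

theorem apply_eq_of_connected_of_forall_edge {V E α : Type*} (t h : E → V) (S : Set E)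
    (hS : (SimpleGraph.fromEdgeSet {s : Sym2 V | ∃ e ∈ S, s = s(t e, h e)}).Connected)
    {φ : V → α} (hφ : ∀ e ∈ S, φ (t e) = φ (h e)) (u v : V) : φ u = φ v := by
  refine (hS.preconnected u v).apply_eq_of_forall_adj fun a b hab => ?_
  obtain ⟨⟨e, he, hs⟩, -⟩ := (SimpleGraph.fromEdgeSet_adj _).mp hab
  rcases Sym2.eq_iff.mp hs with ⟨rfl, rfl⟩ | ⟨rfl, rfl⟩
  exacts [hφ e he, (hφ e he).symm]

theorem submatrix_posDef_of_connected_eliminated_general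
    {V E : Type*} [Fintype E] [DecidableEq E]
    (t h : E → V)
    (d : (V → ℝ) → (E → ℝ))
    (hd : ∀ (φ : V → ℝ) (e : E), d φ e = φ (h e) - φ (t e))
    (K : Matrix E E ℝ) (hK : K.PosSemidef)
    (hker : ∀ x : E → ℝ, K.mulVec x = 0 ↔ ∃ φ : V → ℝ, x = d φ)
    (Ee : Finset E)
    (hEe : (SimpleGraph.fromEdgeSet {s : Sym2 V | ∃ e ∈ Ee, s = s(t e, h e)}).Connected) :
    (K.submatrix (Subtype.val : {e : E // e ∉ Ee} → E)
        (Subtype.val : {e : E // e ∉ Ee} → E)).PosDef ∧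
      IsUnit (K.submatrix (Subtype.val : {e : E // e ∉ Ee} → E)
        (Subtype.val : {e : E // e ∉ Ee} → E)) := by
  have hpd : (K.submatrix (Subtype.val : {e : E // e ∉ Ee} → E) Subtype.val).PosDef := by
    refine hK.posDef_submatrix_of_ker Subtype.val_injective fun y hKy hy => ?_
    obtain ⟨φ, rfl⟩ := (hker y).mp hKy
    have hflat : ∀ e ∈ Ee, φ (t e) = φ (h e) := fun e he => by
      have hde := hy e (by simpa using he)
      rw [hd] at hde
      linarith
    have hconst := apply_eq_of_connected_of_forall_edge t h Ee hEe hflat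
    funext e
    simp [hd, hconst (h e) (t e)]
  exact ⟨hpd, hpd.isUnit⟩

/-- **Lemma 1 (locInv), linear-algebraic form.** Let `G` be a finite connected simple
graph with vertex set `V` and oriented edge set `E` (tails `t`, heads `h`, no loops).
Let `d` be the discrete gradient map `(d φ) e = φ (h e) - φ (t e)`, and let `K` be a real
symmetric positive semidefinite matrix indexed by `E × E` whose kernel (as the linear map
`x ↦ K.mulVec x`) equals the range of `d`. If `Ee ⊆ E` is a set of edges whose spanning
subgraph `(V, Ee)` is connected, then the principal submatrix of `K` on the rows and
columns indexed by `E \ Ee` is positive definite; in particular it is invertible. -/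
theorem submatrix_posDef_of_connected_eliminated
    {V E : Type*} [Fintype V] [DecidableEq V] [Fintype E] [DecidableEq E]
    (t h : E → V) (hloop : ∀ e, t e ≠ h e)
    (hconn : (SimpleGraph.fromEdgeSet {s : Sym2 V | ∃ e : E, s = s(t e, h e)}).Connected)
    (d : (V → ℝ) → (E → ℝ))
    (hd : ∀ (φ : V → ℝ) (e : E), d φ e = φ (h e) - φ (t e))
    (K : Matrix E E ℝ) (hK : K.PosSemidef)
    (hker : ∀ x : E → ℝ, K.mulVec x = 0 ↔ ∃ φ : V → ℝ, x = d φ)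
    (Ee : Finset E)
    (hEe : (SimpleGraph.fromEdgeSet {s : Sym2 V | ∃ e ∈ Ee, s = s(t e, h e)}).Connected) :
    (K.submatrix (Subtype.val : {e : E // e ∉ Ee} → E)
        (Subtype.val : {e : E // e ∉ Ee} → E)).PosDef ∧
      IsUnit (K.submatrix (Subtype.val : {e : E // e ∉ Ee} → E)
        (Subtype.val : {e : E // e ∉ Ee} → E)) :=
  submatrix_posDef_of_connected_eliminated_general t h d hd K hK hker Ee hEe
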